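/- Let f : ℂ → ℂ be analytic at z with f'(z) ≠ 0 and f''(z) ≠ 0. Then the derivative of D f satisfies the identity (D f)'(z) = 2·f'(z)³·S f(z)/f''(z)². Consequently, if f is analytic on a neighborhood of p and f'(w) = (w − p)^m·u(w) with m ≥ 1 and u analytic, u(p) ≠ 0, then D f extends analytically across p and its derivative (D f)' vanishes at p to exact order m; that is, f and D f have the same ramification divisor near p. -/

import Mathlib

open Filter

noncomputable def schwarzian (f : ℂ → ℂ) (z : ℂ) : ℂ :=
  deriv (deriv (deriv f)) z / deriv f z - (3 / 2) * (deriv (deriv f) z / deriv f z) ^ 2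

open Topology

noncomputable def equivariantDeriv (f : ℂ → ℂ) (w : ℂ) : ℂ :=
  f w - 2 * deriv f w ^ 2 / deriv (deriv f) w

lemma deriv_pow_three_mul_schwarzian (f : ℂ → ℂ) (z : ℂ) :
    deriv f z ^ 3 * schwarzian f z
      = deriv f z ^ 2 * deriv (deriv (deriv f)) z - 3 / 2 * deriv f z * deriv (deriv f) z ^ 2 := by
  by_cases h : deriv f z = 0
  · simp [h]
  · unfold schwarzian
    field_simp

lemma hasDerivAt_equivariantDeriv {f : ℂ → ℂ} {z : ℂ} (hf : DifferentiableAt ℂ f z)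
    (hf' : DifferentiableAt ℂ (deriv f) z) (hf'' : DifferentiableAt ℂ (deriv (deriv f)) z)
    (h2 : deriv (deriv f) z ≠ 0) :
    HasDerivAt (equivariantDeriv f)
      (2 * deriv f z ^ 3 * schwarzian f z / deriv (deriv f) z ^ 2) z := by
  refine (hf.hasDerivAt.sub
    (((hf'.hasDerivAt.pow 2).const_mul 2).div hf''.hasDerivAt h2)).congr_deriv ?_
  simp only [Pi.pow_apply, Nat.cast_ofNat, Nat.add_one_sub_one, pow_one]
  rw [mul_assoc 2 (deriv f z ^ 3), deriv_pow_three_mul_schwarzian]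
  field_simp
  ring

lemma hasDerivAt_sub_pow_succ_mul {𝕜 : Type*} [NontriviallyNormedField 𝕜] {g : 𝕜 → 𝕜}
    {w : 𝕜} (p : 𝕜) (k : ℕ) (hg : DifferentiableAt 𝕜 g w) :
    HasDerivAt (fun x => (x - p) ^ (k + 1) * g x)
      ((w - p) ^ k * ((k + 1) * g w + (w - p) * deriv g w)) w := by
  refine ((((hasDerivAt_id w).sub_const p).pow (k + 1)).mul hg.hasDerivAt).congr_deriv ?_
  simp only [Nat.cast_add, Nat.cast_one, id_eq, add_tsub_cancel_right, mul_one, Pi.pow_apply]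
  ring

section Ramification

variable {f u : ℂ → ℂ} {p : ℂ} {n : ℕ}

lemma deriv_deriv_eventuallyEq_of_deriv_eventuallyEq (hu : AnalyticAt ℂ u p)
    (hf' : deriv f =ᶠ[𝓝 p] fun w => (w - p) ^ (n + 1) * u w) :
    deriv (deriv f) =ᶠ[𝓝 p] fun w => (w - p) ^ n * ((n + 1) * u w + (w - p) * deriv u w) := by
  filter_upwards [hf'.deriv, hu.eventually_analyticAt] with w hw hwu
  rw [hw, (hasDerivAt_sub_pow_succ_mul p n hwu.differentiableAt).deriv]

/-- As `f'' = (w − p)^n·h` with `h = (n+1)u + (w − p)u'`, off `p` we have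
`2(f')²/f'' = (w − p)^(n+2)·φ` with `φ = 2u²/h` analytic at `p`; so `G = f − (w − p)^(n+2)·φ`,
and `G' = (w − p)^(n+1)·(u − (n+2)φ − (w − p)φ')` with leading coefficient `−(n+3)/(n+1)·u p`. -/
theorem exists_analyticAt_eventuallyEq_equivariantDeriv (hf : AnalyticAt ℂ f p)
    (hu : AnalyticAt ℂ u p) (hup : u p ≠ 0)
    (hf' : deriv f =ᶠ[𝓝 p] fun w => (w - p) ^ (n + 1) * u w) :
    ∃ G : ℂ → ℂ, AnalyticAt ℂ G p ∧ G =ᶠ[𝓝[≠] p] equivariantDeriv f ∧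
      ∃ v : ℂ → ℂ, AnalyticAt ℂ v p ∧ v p ≠ 0 ∧
        deriv G =ᶠ[𝓝 p] fun w => (w - p) ^ (n + 1) * v w := by
  set h : ℂ → ℂ := fun w => (n + 1) * u w + (w - p) * deriv u w
  have hn : (n + 1 : ℂ) ≠ 0 := Nat.cast_add_one_ne_zero n
  have hp : h p = (n + 1) * u p := by simp [h]
  have hh : AnalyticAt ℂ h p := by fun_prop
  have hhp : h p ≠ 0 := hp ▸ mul_ne_zero hn hup
  set φ : ℂ → ℂ := fun w => 2 * u w ^ 2 / h w
  have hφ : AnalyticAt ℂ φ p := (analyticAt_const.mul (hu.pow 2)).div hh hhp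
  set v : ℂ → ℂ := fun w => u w - (n + 2) * φ w - (w - p) * deriv φ w
  have hv : AnalyticAt ℂ v p := by have := hφ.deriv; fun_prop
  have hvp : v p = -((n + 3) / (n + 1)) * u p := by
    simp only [v, φ, hp, sub_self, zero_mul, sub_zero]
    field_simp
    ring
  have hf'' : deriv (deriv f) =ᶠ[𝓝 p] fun w => (w - p) ^ n * h w :=
    deriv_deriv_eventuallyEq_of_deriv_eventuallyEq hu hf'
  refine ⟨fun w => f w - (w - p) ^ (n + 2) * φ w, by fun_prop, ?_, v, hv, ?_, ?_⟩
  · filter_upwards [nhdsWithin_le_nhds (hf'.and hf''), self_mem_nhdsWithin]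
      with w ⟨hw', hw''⟩ hwp
    have : w - p ≠ 0 := sub_ne_zero.mpr hwp
    simp only [equivariantDeriv, hw', hw'', φ]
    field_simp
    ring
  · rw [hvp]
    exact mul_ne_zero (neg_ne_zero.mpr (div_ne_zero (by norm_cast) hn)) hup
  · filter_upwards [hf.eventually_analyticAt, hφ.eventually_analyticAt, hf'] with w hwf hwφ hw'
    refine (hwf.differentiableAt.hasDerivAt.sub
      (hasDerivAt_sub_pow_succ_mul p (n + 1) hwφ.differentiableAt)).deriv.trans ?_
    rw [hw']
    push_cast
    ring

end Ramification

/-- Paper's Proposition `Ram(D_z f) = Ram(f)`: the first-derivative identity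
`(D f)' = 2·(f')³·(S f)/(f'')²`, and consequently `D f` extends analytically across
each ramification point of `f`, where its derivative vanishes to the same order. -/
theorem D_ramification
    (f : ℂ → ℂ) :
    (∀ z : ℂ, AnalyticAt ℂ f z → deriv f z ≠ 0 → deriv (deriv f) z ≠ 0 →
      deriv (fun w => f w - 2 * (deriv f w) ^ 2 / deriv (deriv f) w) z
        = 2 * (deriv f z) ^ 3 * schwarzian f z / (deriv (deriv f) z) ^ 2) ∧
    (∀ (p : ℂ) (m : ℕ) (u : ℂ → ℂ), AnalyticAt ℂ f p → 1 ≤ m →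
      AnalyticAt ℂ u p → u p ≠ 0 →
      (∀ᶠ w in nhds p, deriv f w = (w - p) ^ m * u w) →
      ∃ G : ℂ → ℂ, AnalyticAt ℂ G p ∧
        (∀ᶠ w in nhdsWithin p {p}ᶜ,
          G w = f w - 2 * (deriv f w) ^ 2 / deriv (deriv f) w) ∧
        ∃ v : ℂ → ℂ, AnalyticAt ℂ v p ∧ v p ≠ 0 ∧
          ∀ᶠ w in nhds p, deriv G w = (w - p) ^ m * v w) := by
  refine ⟨fun z hf _ h2 => ?_, fun p m u hf hm hu hup hf' => ?_⟩
  · exact (hasDerivAt_equivariantDeriv hf.differentiableAt hf.deriv.differentiableAt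
      hf.deriv.deriv.differentiableAt h2).deriv
  · obtain ⟨n, rfl⟩ := Nat.exists_eq_add_of_le' hm
    exact exists_analyticAt_eventuallyEq_equivariantDeriv hf hu hup hf'
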